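/- (Theorem 1, the paper's main theoretical result, stated with the labeling function in the hypothesis class.) Let X be a measurable space, let D_A and D_B be probability measures on X, and let H be a class of measurable functions from X to {0,1} such that the support collection of the symmetric-difference class HΔH = {x ↦ h(x) XOR h'(x) | h, h' ∈ H} has VC dimension at most d. Let f ∈ H be a labeling function, and for a probability measure D define the risk ε_D(h, f) = D({x | h(x) ≠ f(x)}). Let n be a positive integer, draw n i.i.d. samples from D_A and n i.i.d. samples from D_B (product measure D_A^n ⊗ D_B^n), and let D̂_A and D̂_B be the corresponding empirical measures. Then for every δ ∈ (0,1), with probability at least 1 − δ over the draw of the samples, simultaneously for all h ∈ H: |ε_{D_A}(h, f) − ε_{D_B}(h, f)| ≤ (1/2) · d_{HΔH}(D̂_A, D̂_B) + 2·√((d·log(2n) + log(2/δ))/n). -/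

import Mathlib

open MeasureTheory

/-- Support of a `{0,1}`-valued (here `Bool`-valued) function: preimage of `1` (`true`). -/
def support01 {X : Type*} (g : X → Bool) : Set X := g ⁻¹' {true}

/-- The `G`-divergence between two measures: twice the supremum over supports of
functions in `G` of the discrepancy of the measures. -/
noncomputable def Gdiv {X : Type*} [MeasurableSpace X] (G : Set (X → Bool))
    (D D' : Measure X) : ℝ :=
  2 * ⨆ g : G, |(D (support01 (g : X → Bool))).toReal -
      (D' (support01 (g : X → Bool))).toReal|

/-- Risk of a hypothesis `h` against a labeling function `f` under measure `D`. -/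
noncomputable def risk {X : Type*} [MeasurableSpace X] (D : Measure X)
    (h f : X → Bool) : ℝ :=
  (D {x | h x ≠ f x}).toReal

/-- The symmetric-difference class `HΔH = {x ↦ h(x) XOR h'(x) | h, h' ∈ H}`. -/
def symDiffClass {X : Type*} (H : Set (X → Bool)) : Set (X → Bool) :=
  {g | ∃ h ∈ H, ∃ h' ∈ H, g = fun x => Bool.xor (h x) (h' x)}

/-- A collection of subsets `𝒮` shatters a finite set `F` if every subset of `F`
arises as `F ∩ S` for some `S ∈ 𝒮`. -/
def Shatters {X : Type*} (𝒮 : Set (Set X)) (F : Finset X) : Prop :=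
  ∀ T ⊆ F, ∃ S ∈ 𝒮, (F : Set X) ∩ S = (T : Set X)

/-- The collection `𝒮` has VC dimension at most `d`: every shattered finite set
has cardinality at most `d`. -/
def VCDimLE {X : Type*} (𝒮 : Set (Set X)) (d : ℕ) : Prop :=
  ∀ F : Finset X, Shatters 𝒮 F → F.card ≤ d

/-- The empirical measure of the sample points `x 0, …, x (n-1)`, assigning mass
`1/n` to each sample point. -/
noncomputable def empMeasure {X : Type*} [MeasurableSpace X] {n : ℕ}
    (x : Fin n → X) : Measure X :=
  (n : ENNReal)⁻¹ • ∑ i, Measure.dirac (x i)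

/-!
The left-hand side does not depend on the sample, so a single set has to be controlled. Pick
`h₀ ∈ H` whose risk gap `|ε_A(h₀,f) - ε_B(h₀,f)|` is within `η` of the supremum over `H`. By
Hoeffding's inequality, with probability at least `1 - δ` the empirical frequencies of
`{h₀ ≠ f}` under both samples are within `s = √(log (4/δ) / (2n))` of `D_A` and `D_B`; since
`h₀ XOR f ∈ HΔH` has exactly this support, the empirical gap is at most `½ d_{HΔH}(D̂_A, D̂_B)`.
Hence every risk gap is at most `½ d_{HΔH}(D̂_A, D̂_B) + 2s + η`, and `s` is strictly below
`√((d log(2n) + log(2/δ)) / n)` because `δ < 1`, leaving room for `η`.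
-/

open ProbabilityTheory Real
open scoped NNReal ENNReal

lemma ProbabilityTheory.HasSubgaussianMGF.measureReal_abs_ge_le {Ω : Type*}
    {mΩ : MeasurableSpace Ω} {μ : Measure Ω} [IsFiniteMeasure μ] {X : Ω → ℝ} {c : ℝ≥0}
    (h : HasSubgaussianMGF X c μ) {ε : ℝ} (hε : 0 ≤ ε) :
    μ.real {ω | ε ≤ |X ω|} ≤ 2 * exp (-ε ^ 2 / (2 * c)) := by
  have hsub : {ω | ε ≤ |X ω|} ⊆ {ω | ε ≤ X ω} ∪ {ω | ε ≤ (-X) ω} := fun _ hω =>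
    le_abs.1 hω.out
  calc μ.real {ω | ε ≤ |X ω|} ≤ μ.real ({ω | ε ≤ X ω} ∪ {ω | ε ≤ (-X) ω}) :=
        measureReal_mono hsub
    _ ≤ μ.real {ω | ε ≤ X ω} + μ.real {ω | ε ≤ (-X) ω} := measureReal_union_le _ _
    _ ≤ 2 * exp (-ε ^ 2 / (2 * c)) := by
        linarith [h.measure_ge_le hε, h.neg.measure_ge_le hε]

lemma hasSubgaussianMGF_sum_indicator_sub {X ι : Type*} [MeasurableSpace X] [Fintype ι]
    (D : Measure X) [IsProbabilityMeasure D] {S : Set X} (hS : MeasurableSet S) :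
    HasSubgaussianMGF (fun x : ι → X => ∑ i, (S.indicator 1 (x i) - D.real S))
      (Fintype.card ι / 4) (Measure.pi fun _ => D) := by
  have hφ : Measurable (S.indicator (1 : X → ℝ)) := measurable_const.indicator hS
  have hD : HasSubgaussianMGF (fun y => S.indicator 1 y - D.real S) (1 / 4) D := by
    have := hasSubgaussianMGF_of_mem_Icc (μ := D) (a := 0) (b := 1) hφ.aemeasurable
      (ae_of_all _ fun y => ⟨Set.indicator_nonneg (fun _ _ => zero_le_one) y,
        Set.indicator_le_self' (fun _ _ => zero_le_one) y⟩)
    rw [integral_indicator_one hS] at this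
    convert this using 1
    norm_num
  have hcoord : ∀ i : ι, HasSubgaussianMGF (fun x : ι → X => S.indicator 1 (x i) - D.real S)
      (1 / 4) (Measure.pi fun _ => D) := fun i =>
    HasSubgaussianMGF.of_map (measurable_pi_apply i).aemeasurable
      (by rwa [(measurePreserving_eval (fun _ => D) i).map_eq])
  have hindep := iIndepFun_pi (μ := fun _ : ι => D)
    (X := fun _ y => S.indicator (1 : X → ℝ) y - D.real S) fun _ => (hφ.sub_const _).aemeasurable
  convert HasSubgaussianMGF.sum_of_iIndepFun hindep (s := Finset.univ) fun i _ => hcoord i using 1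
  simp [div_eq_mul_inv]

section empMeasure

variable {X : Type*} [MeasurableSpace X] {n : ℕ}

lemma empMeasure_apply (x : Fin n → X) {S : Set X} (hS : MeasurableSet S) :
    empMeasure x S = (n : ℝ≥0∞)⁻¹ * ∑ i, S.indicator 1 (x i) := by
  simp only [empMeasure, Measure.smul_apply, smul_eq_mul, Measure.finsetSum_apply,
    Measure.dirac_apply' _ hS]

lemma isProbabilityMeasure_empMeasure (hn : 0 < n) (x : Fin n → X) :
    IsProbabilityMeasure (empMeasure x) := by
  constructor
  rw [empMeasure_apply x MeasurableSet.univ]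
  simp [ENNReal.inv_mul_cancel, hn.ne']

lemma empMeasure_toReal_eq (x : Fin n → X) {S : Set X} (hS : MeasurableSet S) :
    (empMeasure x S).toReal = (∑ i, S.indicator 1 (x i)) / n := by
  have hind : ∀ y, (S.indicator (1 : X → ℝ≥0∞) y).toReal = S.indicator 1 y := fun y => by
    by_cases hy : y ∈ S <;> simp [hy]
  rw [empMeasure_apply x hS, ENNReal.toReal_mul, ENNReal.toReal_sum (fun i _ => by
    by_cases hy : x i ∈ S <;> simp [hy])]
  simp [hind, div_eq_inv_mul]

lemma measure_abs_empMeasure_sub_ge_le (D : Measure X) [IsProbabilityMeasure D]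
    {S : Set X} (hS : MeasurableSet S) (hn : 0 < n) {s : ℝ} (hs : 0 ≤ s) :
    (Measure.pi fun _ : Fin n => D) {x | s ≤ |(empMeasure x S).toReal - (D S).toReal|} ≤
      ENNReal.ofReal (2 * exp (-2 * n * s ^ 2)) := by
  have hn' : (0 : ℝ) < n := Nat.cast_pos.2 hn
  have hset : {x : Fin n → X | s ≤ |(empMeasure x S).toReal - (D S).toReal|} =
      {x | n * s ≤ |∑ i, (S.indicator 1 (x i) - D.real S)|} := by
    ext x
    rw [Set.mem_ofPred_eq, Set.mem_ofPred_eq, empMeasure_toReal_eq x hS, Finset.sum_sub_distrib,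
      Finset.sum_const, Finset.card_univ, Fintype.card_fin, nsmul_eq_mul,
      ← mul_le_mul_iff_right₀ hn', ← abs_of_pos hn', ← abs_mul, abs_of_pos hn',
      mul_sub, mul_div_cancel₀ _ hn'.ne']
    rfl
  rw [hset, ← ENNReal.ofReal_toReal (measure_ne_top _ _)]
  refine ENNReal.ofReal_le_ofReal ((hasSubgaussianMGF_sum_indicator_sub D hS).measureReal_abs_ge_le
    (by positivity) |>.trans_eq ?_)
  simp only [Fintype.card_fin, NNReal.coe_div, NNReal.coe_natCast]
  congr 2
  field_simp
  push_cast
  ring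

end empMeasure

lemma abs_measureReal_sub_le_one {X : Type*} [MeasurableSpace X] (D D' : Measure X)
    [IsProbabilityMeasure D] [IsProbabilityMeasure D'] (S T : Set X) :
    |D.real S - D'.real T| ≤ 1 :=
  abs_sub_le_of_nonneg_of_le measureReal_nonneg measureReal_le_one measureReal_nonneg
    measureReal_le_one

lemma abs_measure_sub_le_half_Gdiv {X : Type*} [MeasurableSpace X] {G : Set (X → Bool)}
    (D D' : Measure X) [IsProbabilityMeasure D] [IsProbabilityMeasure D'] {g : X → Bool}
    (hg : g ∈ G) :
    |(D (support01 g)).toReal - (D' (support01 g)).toReal| ≤ 1 / 2 * Gdiv G D D' := by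
  have hbdd : BddAbove (Set.range fun g : G =>
      |(D (support01 (g : X → Bool))).toReal - (D' (support01 (g : X → Bool))).toReal|) :=
    ⟨1, Set.forall_mem_range.2 fun _ => abs_measureReal_sub_le_one D D' _ _⟩
  rw [Gdiv, ← mul_assoc, one_div_mul_cancel two_ne_zero, one_mul]
  exact le_ciSup hbdd ⟨g, hg⟩

lemma support01_xor {X : Type*} (h f : X → Bool) :
    support01 (fun x => xor (h x) (f x)) = {x | h x ≠ f x} := by
  ext x
  cases h x <;> cases f x <;> simp [support01]

lemma abs_risk_sub_le_half_Gdiv_add {X : Type*} [MeasurableSpace X] {H : Set (X → Bool)}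
    {DA DB EA EB : Measure X} [IsProbabilityMeasure EA] [IsProbabilityMeasure EB]
    {h f : X → Bool} (hh : h ∈ H) (hf : f ∈ H) {s : ℝ}
    (hA : |risk EA h f - risk DA h f| ≤ s) (hB : |risk EB h f - risk DB h f| ≤ s) :
    |risk DA h f - risk DB h f| ≤ 1 / 2 * Gdiv (symDiffClass H) EA EB + 2 * s := by
  have hE := abs_measure_sub_le_half_Gdiv EA EB (G := symDiffClass H) ⟨h, hh, f, hf, rfl⟩
  rw [support01_xor] at hE
  change |risk EA h f - risk EB h f| ≤ _ at hE
  linarith [abs_sub_comm (risk DA h f) (risk EA h f),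
    abs_sub_le (risk DA h f) (risk EA h f) (risk DB h f),
    abs_sub_le (risk EA h f) (risk EB h f) (risk DB h f)]

lemma exists_mem_forall_lt_add {α : Type*} {s : Set α} (hs : s.Nonempty) {u : α → ℝ}
    (hu : BddAbove (u '' s)) {η : ℝ} (hη : 0 < η) : ∃ a ∈ s, ∀ b ∈ s, u b < u a + η := by
  obtain ⟨_, ⟨a, ha, rfl⟩, hlt⟩ := exists_lt_of_lt_csSup (hs.image u) (sub_lt_self _ hη)
  exact ⟨a, ha, fun b hb => by linarith [le_csSup hu (Set.mem_image_of_mem u hb)]⟩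

lemma one_sub_add_le_measure_prod {α β : Type*} [MeasurableSpace α] [MeasurableSpace β]
    {μ : Measure α} {ν : Measure β} [IsProbabilityMeasure μ] [IsProbabilityMeasure ν]
    {A : Set α} {B : Set β} {T : Set (α × β)} (hT : ∀ p : α × β, p.1 ∉ A → p.2 ∉ B → p ∈ T) :
    1 - (μ A + ν B) ≤ μ.prod ν T := by
  have hcompl : Tᶜ ⊆ Prod.fst ⁻¹' A ∪ Prod.snd ⁻¹' B := fun p hp => by
    by_contra hAB
    simp only [Set.mem_union, Set.mem_preimage, not_or] at hAB
    exact hp (hT p hAB.1 hAB.2)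
  have hbad : μ.prod ν Tᶜ ≤ μ A + ν B :=
    calc μ.prod ν Tᶜ ≤ μ.prod ν (Prod.fst ⁻¹' A) + μ.prod ν (Prod.snd ⁻¹' B) :=
          (measure_mono hcompl).trans (measure_union_le _ _)
      _ = μ A + ν B := by
          rw [← Set.prod_univ, ← Set.univ_prod, Measure.prod_prod, Measure.prod_prod,
            measure_univ, measure_univ, mul_one, one_mul]
  calc 1 - (μ A + ν B) ≤ 1 - μ.prod ν Tᶜ := tsub_le_tsub_left hbad 1
    _ ≤ μ.prod ν T := by
        rw [tsub_le_iff_right, ← measure_univ (μ := μ.prod ν)]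
        exact measure_univ_le_add_compl T

lemma sqrt_log_four_div_lt {d n : ℕ} (hn : 0 < n) {δ : ℝ} (hδ0 : 0 < δ) (hδ1 : δ < 1) :
    √(log (4 / δ) / (2 * n)) < √((d * log (2 * n) + log (2 / δ)) / n) := by
  have hn' : (1 : ℝ) ≤ n := Nat.one_le_cast.2 hn
  have hlog4 : log (4 / δ) = log 2 + log (2 / δ) := by
    rw [← log_mul two_ne_zero (by positivity)]; ring_nf
  have hlog2 : log 2 < log (2 / δ) := log_lt_log two_pos (by rw [lt_div_iff₀ hδ0]; linarith)
  have hdlog : 0 ≤ d * log (2 * n) := mul_nonneg d.cast_nonneg (log_nonneg (by linarith))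
  apply sqrt_lt_sqrt (div_nonneg (by rw [hlog4]; linarith [log_pos one_lt_two]) (by positivity))
  rw [div_lt_div_iff₀ (by positivity) (by positivity)]
  nlinarith

lemma two_mul_exp_neg_sqrt_log_four_div {n : ℕ} (hn : 0 < n) {δ : ℝ} (hδ0 : 0 < δ)
    (hδ1 : δ < 1) : 2 * exp (-2 * n * √(log (4 / δ) / (2 * n)) ^ 2) = δ / 2 := by
  have hn' : (0 : ℝ) < n := Nat.cast_pos.2 hn
  have hlog : 0 ≤ log (4 / δ) := log_nonneg (by rw [le_div_iff₀ hδ0]; linarith)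
  rw [sq_sqrt (by positivity), show -2 * n * (log (4 / δ) / (2 * n)) = -log (4 / δ) by
    field_simp, exp_neg, exp_log (by positivity)]
  field_simp
  ring

theorem perf_gap_bound_general {X : Type*} [MeasurableSpace X]
    (DA DB : Measure X) [IsProbabilityMeasure DA] [IsProbabilityMeasure DB]
    (H : Set (X → Bool)) (hH : ∀ h ∈ H, Measurable h)
    (d : ℕ)
    (f : X → Bool) (hf : f ∈ H)
    (n : ℕ) (hn : 0 < n) (δ : ℝ) (hδ : δ ∈ Set.Ioo (0 : ℝ) 1) :
    ENNReal.ofReal (1 - δ) ≤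
      ((Measure.pi fun _ : Fin n => DA).prod (Measure.pi fun _ : Fin n => DB))
        {p : (Fin n → X) × (Fin n → X) |
          ∀ h ∈ H,
            |risk DA h f - risk DB h f| ≤
              (1 / 2) * Gdiv (symDiffClass H) (empMeasure p.1) (empMeasure p.2) +
                2 * Real.sqrt ((d * Real.log (2 * n) + Real.log (2 / δ)) / n)} := by
  obtain ⟨hδ0, hδ1⟩ := hδ
  set r := √((d * log (2 * n) + log (2 / δ)) / n)
  set s := √(log (4 / δ) / (2 * n))
  have hsr : s < r := sqrt_log_four_div_lt hn hδ0 hδ1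
  obtain ⟨h₀, h₀H, hh₀⟩ := exists_mem_forall_lt_add ⟨f, hf⟩
    (u := fun h => |risk DA h f - risk DB h f|)
    ⟨1, Set.forall_mem_image.2 fun _ _ => abs_measureReal_sub_le_one DA DB _ _⟩
    (by linarith : 0 < 2 * (r - s))
  have htail (D : Measure X) [IsProbabilityMeasure D] :
      (Measure.pi fun _ : Fin n => D) {x | s ≤ |risk (empMeasure x) h₀ f - risk D h₀ f|} ≤
        ENNReal.ofReal (δ / 2) := by
    rw [← two_mul_exp_neg_sqrt_log_four_div hn hδ0 hδ1]
    exact measure_abs_empMeasure_sub_ge_le D (measurableSet_eq_fun (hH h₀ h₀H) (hH f hf)).compl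
      hn (sqrt_nonneg _)
  calc ENNReal.ofReal (1 - δ) = 1 - (ENNReal.ofReal (δ / 2) + ENNReal.ofReal (δ / 2)) := by
        rw [← ENNReal.ofReal_add (by positivity) (by positivity), add_halves,
          ENNReal.ofReal_sub _ hδ0.le, ENNReal.ofReal_one]
    _ ≤ 1 - ((Measure.pi fun _ : Fin n => DA) _ + (Measure.pi fun _ : Fin n => DB) _) := by
        gcongr <;> exact htail _
    _ ≤ _ := one_sub_add_le_measure_prod fun p hA hB => by
        have := isProbabilityMeasure_empMeasure hn p.1
        have := isProbabilityMeasure_empMeasure hn p.2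
        simp only [Set.mem_ofPred_eq, not_le] at hA hB
        intro h hh
        linarith [hh₀ h hh, abs_risk_sub_le_half_Gdiv_add (H := H) h₀H hf hA.le hB.le]

/-- Theorem 1 of the paper: if the support collection of `HΔH` has VC dimension at
most `d`, and `f ∈ H` is the labeling function, then with probability at least
`1 - δ` over `n` i.i.d. samples from each of `D_A`, `D_B`, simultaneously for all
`h ∈ H`,
`|ε_{D_A}(h,f) − ε_{D_B}(h,f)| ≤ ½ d_{HΔH}(D̂_A, D̂_B) + 2 √((d log(2n) + log(2/δ))/n)`. -/
theorem perf_gap_bound {X : Type*} [MeasurableSpace X]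
    (DA DB : Measure X) [IsProbabilityMeasure DA] [IsProbabilityMeasure DB]
    (H : Set (X → Bool)) (hH : ∀ h ∈ H, Measurable h)
    (d : ℕ)
    (hVC : VCDimLE {S | ∃ g ∈ symDiffClass H, S = support01 g} d)
    (f : X → Bool) (hf : f ∈ H)
    (n : ℕ) (hn : 0 < n) (δ : ℝ) (hδ : δ ∈ Set.Ioo (0 : ℝ) 1) :
    ENNReal.ofReal (1 - δ) ≤
      ((Measure.pi fun _ : Fin n => DA).prod (Measure.pi fun _ : Fin n => DB))
        {p : (Fin n → X) × (Fin n → X) |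
          ∀ h ∈ H,
            |risk DA h f - risk DB h f| ≤
              (1 / 2) * Gdiv (symDiffClass H) (empMeasure p.1) (empMeasure p.2) +
                2 * Real.sqrt ((d * Real.log (2 * n) + Real.log (2 / δ)) / n)} :=
  perf_gap_bound_general DA DB H hH d f hf n hn δ hδ
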